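/- arXiv:2109.12441 — 11 statements merged into one kernel-verified Lean document; each statement's English description precedes it below -/
import Mathlib

section
/- Let A be an n×n complex matrix and let Â be the 2n×2n block matrix [[γA, (1−γ)A],[I, 0]] for a real parameter γ. If (λ, v) is an eigenpair of A, then for each root λ̂ of the quadratic λ̂² − γλλ̂ + (γ−1)λ = 0, the pair (λ̂, [λ̂v; v]) is an eigenpair of Â. -/
open Matrix

theorem stmt_0 (n : ℕ) (A : Matrix (Fin n) (Fin n) ℂ) (γ : ℝ)
    (Ahat : Matrix (Fin n ⊕ Fin n) (Fin n ⊕ Fin n) ℂ)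
    (hAhat : Ahat = Matrix.fromBlocks ((γ : ℂ) • A) ((1 - (γ : ℂ)) • A) 1 0)
    (lam : ℂ) (v : Fin n → ℂ) (hv : v ≠ 0) (heig : A.mulVec v = lam • v)
    (lamhat : ℂ) (hroot : lamhat ^ 2 - (γ : ℂ) * lam * lamhat + ((γ : ℂ) - 1) * lam = 0) :
    Ahat.mulVec (Sum.elim (lamhat • v) v) = lamhat • Sum.elim (lamhat • v) v ∧
      Sum.elim (lamhat • v) v ≠ 0 := by
  constructor
  · subst hAhat
    funext i
    cases i with
    | inl i =>
      simp [Matrix.fromBlocks_mulVec, Matrix.mulVec_smul, heig, Matrix.smul_mulVec,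
        smul_smul, Pi.smul_apply, Pi.add_apply]
      linear_combination (-(v i)) * hroot
    | inr i =>
      simp [Matrix.fromBlocks_mulVec, Matrix.one_mulVec]
  · intro h
    apply hv
    funext i
    have := congrFun h (Sum.inr i)
    simpa using this
end

section
/- Let A be an n×n complex matrix and Â = [[γA, (1−γ)A],[I, 0]]. If (λ̂, [v₁; v₂]) is an eigenpair of Â with λ̂ ≠ 0 and γλ̂ + 1 − γ ≠ 0, then v₂ is an eigenvector of A with eigenvalue λ̂²/(γλ̂ + 1 − γ), and v₁ = λ̂ v₂. -/
open Matrix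

section BlockEigen

variable {m R : Type*} [Fintype m] [DecidableEq m]

theorem Matrix.eq_smul_and_mulVec_of_fromBlocks_one_zero [CommRing R] {B C : Matrix m m R}
    {v₁ v₂ : m → R} {μ : R}
    (h : fromBlocks B C 1 0 *ᵥ Sum.elim v₁ v₂ = μ • Sum.elim v₁ v₂) :
    v₁ = μ • v₂ ∧ B *ᵥ v₁ + C *ᵥ v₂ = μ • v₁ := by
  rw [fromBlocks_mulVec] at h
  have hTop (i : m) := congrFun h (Sum.inl i)
  have hBottom (i : m) := congrFun h (Sum.inr i)
  simp only [Sum.elim_inl, Sum.elim_inr, Sum.elim_comp_inl, Sum.elim_comp_inr, Pi.smul_apply,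
    one_mulVec, zero_mulVec, add_zero] at hTop hBottom
  exact ⟨funext hBottom, funext hTop⟩

theorem Matrix.mulVec_eq_smul_of_fromBlocks_smul_smul_one_zero [Field R] (A : Matrix m m R)
    (γ μ : R) {v₁ v₂ : m → R} (hden : γ * μ + 1 - γ ≠ 0)
    (h : fromBlocks (γ • A) ((1 - γ) • A) 1 0 *ᵥ Sum.elim v₁ v₂ = μ • Sum.elim v₁ v₂) :
    v₁ = μ • v₂ ∧ A *ᵥ v₂ = (μ ^ 2 / (γ * μ + 1 - γ)) • v₂ := by
  obtain ⟨hv₁, hTop⟩ := eq_smul_and_mulVec_of_fromBlocks_one_zero h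
  refine ⟨hv₁, ?_⟩
  have hquad : (γ * μ + 1 - γ) • A *ᵥ v₂ = μ ^ 2 • v₂ := by
    rw [hv₁, smul_mulVec, smul_mulVec, mulVec_smul, smul_smul, smul_smul, ← add_smul] at hTop
    rw [sq, ← hTop, add_sub_assoc]
  rw [div_eq_inv_mul, mul_smul, ← hquad, inv_smul_smul₀ hden]

end BlockEigen

theorem stmt_1_general (n : ℕ) (A : Matrix (Fin n) (Fin n) ℂ) (γ : ℝ)
    (Ahat : Matrix (Fin n ⊕ Fin n) (Fin n ⊕ Fin n) ℂ)
    (hAhat : Ahat = Matrix.fromBlocks ((γ : ℂ) • A) ((1 - (γ : ℂ)) • A) 1 0)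
    (lamhat : ℂ) (v₁ v₂ : Fin n → ℂ)
    (hv : Sum.elim v₁ v₂ ≠ 0)
    (heig : Ahat.mulVec (Sum.elim v₁ v₂) = lamhat • Sum.elim v₁ v₂)
    (hden : (γ : ℂ) * lamhat + 1 - (γ : ℂ) ≠ 0) :
    v₂ ≠ 0 ∧
      A.mulVec v₂ = (lamhat ^ 2 / ((γ : ℂ) * lamhat + 1 - (γ : ℂ))) • v₂ ∧
      v₁ = lamhat • v₂ := by
  subst hAhat
  obtain ⟨hv₁, hA⟩ := mulVec_eq_smul_of_fromBlocks_smul_smul_one_zero A _ _ hden heig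
  refine ⟨?_, hA, hv₁⟩
  rintro rfl
  exact hv (by simp [hv₁])

theorem stmt_1 (n : ℕ) (A : Matrix (Fin n) (Fin n) ℂ) (γ : ℝ)
    (Ahat : Matrix (Fin n ⊕ Fin n) (Fin n ⊕ Fin n) ℂ)
    (hAhat : Ahat = Matrix.fromBlocks ((γ : ℂ) • A) ((1 - (γ : ℂ)) • A) 1 0)
    (lamhat : ℂ) (v₁ v₂ : Fin n → ℂ)
    (hv : Sum.elim v₁ v₂ ≠ 0)
    (heig : Ahat.mulVec (Sum.elim v₁ v₂) = lamhat • Sum.elim v₁ v₂)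
    (hlam : lamhat ≠ 0) (hden : (γ : ℂ) * lamhat + 1 - (γ : ℂ) ≠ 0) :
    v₂ ≠ 0 ∧
      A.mulVec v₂ = (lamhat ^ 2 / ((γ : ℂ) * lamhat + 1 - (γ : ℂ))) • v₂ ∧
      v₁ = lamhat • v₂ :=
  stmt_1_general n A γ Ahat hAhat lamhat v₁ v₂ hv heig hden
end

section
/- Let λ ∈ ℝ with −1 ≤ λ < 1 and γ ∈ (0,2) with 2γλ − λ + 1 > 0. Then both roots of the quadratic z² − γλ z + (γ−1)λ = 0 have modulus strictly less than 1. -/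
/-!
Write the equation as `z² - a z + b = 0` with `a = γλ` and `b = (γ - 1)λ`, and apply the Jury
criterion: `b < 1`, `1 - a + b > 0` and `1 + a + b > 0` force both roots into the open unit disc.
A non-real root has real part `a / 2` (read off the imaginary part of the equation), hence
`|z|² = b`. A real root lies in `(-1, 1)` because the polynomial is positive at `±1` while its
vertex `a / 2` lies in `(-1, 1)`.
-/

theorem abs_lt_one_of_sq_sub_mul_add_eq_zero {a b x : ℝ} (hb : b < 1) (h₁ : 0 < 1 - a + b)
    (h₂ : 0 < 1 + a + b) (hx : x ^ 2 - a * x + b = 0) : |x| < 1 := by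
  have hright : (x - 1) * (x - (a - 1)) = -(1 - a + b) := by linear_combination hx
  have hleft : (x + 1) * (x - (a + 1)) = -(1 + a + b) := by linear_combination hx
  rw [abs_lt]
  constructor
  · by_contra! h
    nlinarith
  · by_contra! h
    nlinarith

theorem Complex.norm_lt_one_of_sq_sub_mul_add_eq_zero {a b : ℝ} (hb : b < 1)
    (h₁ : 0 < 1 - a + b) (h₂ : 0 < 1 + a + b) {z : ℂ}
    (hz : z ^ 2 - (a : ℂ) * z + (b : ℂ) = 0) : ‖z‖ < 1 := by
  have hre : z.re ^ 2 - z.im ^ 2 - a * z.re + b = 0 := by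
    simpa [sq] using congrArg Complex.re hz
  have him : z.im * (2 * z.re - a) = 0 := by
    linear_combination (by simpa [sq] using congrArg Complex.im hz : _ = _)
  rw [← sq_lt_one_iff₀ (norm_nonneg z), Complex.sq_norm, Complex.normSq_apply]
  rcases eq_or_ne z.im 0 with hreal | hnonreal
  · rw [hreal, mul_zero, add_zero, ← sq]
    exact (sq_lt_one_iff_abs_lt_one z.re).mpr
      (abs_lt_one_of_sq_sub_mul_add_eq_zero hb h₁ h₂ (by simpa [hreal] using hre))
  · have hvertex : 2 * z.re = a := by
      linarith [(mul_eq_zero.mp him).resolve_left hnonreal]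
    have : z.re * z.re + z.im * z.im = b := by
      linear_combination z.re * hvertex - hre
    linarith

theorem stmt_3 (lam γ : ℝ) (hlam : -1 ≤ lam) (hlam' : lam < 1)
    (hγ : 0 < γ) (hγ' : γ < 2) (hcrit : 2 * γ * lam - lam + 1 > 0)
    (z : ℂ) (hz : z ^ 2 - (γ : ℂ) * (lam : ℂ) * z + ((γ : ℂ) - 1) * (lam : ℂ) = 0) :
    ‖z‖ < 1 := by
  refine Complex.norm_lt_one_of_sq_sub_mul_add_eq_zero (a := γ * lam) (b := (γ - 1) * lam)
    ?_ (by linarith) (by linarith) (by push_cast; exact hz)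
  rcases le_total 0 lam with hnonneg | hnonpos
  · nlinarith
  · nlinarith
end

section
/- Let a, b ∈ ℝ with 1 + a + b ≠ 0. If every root s of (1+a+b)s² + 2(1−b)s + (b−a+1) = 0 satisfies Re(s) < 0, then both roots of z² + az + b = 0 have modulus < 1. -/
/-
The Möbius map z ↦ (z + 1) / (z - 1) sends the open unit disc onto the open left half-plane,
and it carries a root z ≠ 1 of z² + a z + b to a root of (1 + a + b) s² + 2 (1 - b) s + (b - a + 1)
(multiply through by (z - 1)²). The hypothesis 1 + a + b ≠ 0 rules out the root z = 1.
-/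

open Complex

theorem Complex.re_add_one_div_sub_one (z : ℂ) :
    ((z + 1) / (z - 1)).re = (normSq z - 1) / normSq (z - 1) := by
  simp only [div_re, normSq_apply, add_re, sub_re, add_im, sub_im, one_re, one_im]
  ring

theorem Complex.re_add_one_div_sub_one_neg_iff (z : ℂ) :
    ((z + 1) / (z - 1)).re < 0 ↔ ‖z‖ < 1 := by
  rcases eq_or_ne z 1 with rfl | hz1
  · simp -- `(1 + 1) / 0 = 0`, so both sides are false
  have hden : 0 < normSq (z - 1) := normSq_pos.mpr (sub_ne_zero.mpr hz1)
  rw [re_add_one_div_sub_one, div_lt_iff₀ hden, zero_mul, sub_neg, normSq_eq_norm_sq,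
    sq_lt_one_iff₀ (norm_nonneg z)]

theorem bilinear_transform_root {K : Type*} [Field K] {a b z : K}
    (hz : z ^ 2 + a * z + b = 0) (hz1 : z ≠ 1) :
    (1 + a + b) * ((z + 1) / (z - 1)) ^ 2 + 2 * (1 - b) * ((z + 1) / (z - 1)) + (b - a + 1) = 0 := by
  have hzd : z - 1 ≠ 0 := sub_ne_zero.mpr hz1
  field_simp
  linear_combination 4 * hz

theorem ne_one_of_root {K : Type*} [Ring K] {a b z : K}
    (hz : z ^ 2 + a * z + b = 0) (hne : 1 + a + b ≠ 0) : z ≠ 1 := by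
  rintro rfl
  exact hne (by simpa using hz)

theorem stmt_6 (a b : ℝ) (hne : 1 + a + b ≠ 0)
    (hroots : ∀ s : ℂ,
      ((1 : ℂ) + a + b) * s ^ 2 + 2 * (1 - (b : ℂ)) * s + ((b : ℂ) - a + 1) = 0 → s.re < 0)
    (z : ℂ) (hz : z ^ 2 + (a : ℂ) * z + (b : ℂ) = 0) :
    ‖z‖ < 1 := by
  have hne' : (1 : ℂ) + a + b ≠ 0 := by exact_mod_cast hne
  have hz1 : z ≠ 1 := ne_one_of_root hz hne'
  exact (re_add_one_div_sub_one_neg_iff z).mp (hroots _ (bilinear_transform_root hz hz1))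
end

section
/- Let A be a symmetric, irreducible, row-stochastic, nonnegative n×n real matrix with smallest eigenvalue λ_n, and let Â = [[γA, (1−γ)A],[I, 0]]. If Â is semi-convergent (lim_{k→∞} Â^k exists and is nonzero), then γ ∈ (0,2) and 2γλ_n − λ_n + 1 > 0. -/
open Matrix Filter

private lemma pow_conv_bounds {r m : ℝ} (h : Tendsto (fun k => r ^ k) atTop (nhds m)) :
    -1 < r ∧ r ≤ 1 := by
  have hle : r ≤ 1 := by
    by_contra hr
    push_neg at hr
    exact not_tendsto_atTop_of_tendsto_nhds h (tendsto_pow_atTop_atTop_of_one_lt hr)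
  refine ⟨?_, hle⟩
  by_contra hr
  push_neg at hr
  have h2 : Tendsto (fun k : ℕ => 2 * k) atTop atTop :=
    tendsto_atTop_atTop_of_monotone (fun a b hab => by omega) (fun b => ⟨b, by omega⟩)
  have heven : Tendsto (fun k => (r ^ 2) ^ k) atTop (nhds m) := by
    have := h.comp h2
    simpa [Function.comp_def, pow_mul] using this
  have h1 : (1:ℝ) ≤ r ^ 2 := by nlinarith
  rcases lt_or_eq_of_le h1 with h2' | h2'
  · exact not_tendsto_atTop_of_tendsto_nhds heven (tendsto_pow_atTop_atTop_of_one_lt h2')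
  · have hrm : r = -1 := by nlinarith
    subst hrm
    have hm1 : m = 1 := by
      refine tendsto_nhds_unique heven ?_
      simpa [← h2'] using (tendsto_const_nhds : Tendsto (fun _ : ℕ => (1:ℝ)) atTop (nhds 1))
    have hodd : Tendsto (fun k : ℕ => 2 * k + 1) atTop atTop :=
      tendsto_atTop_atTop_of_monotone (fun a b hab => by omega) (fun b => ⟨b, by omega⟩)
    have hm2 : m = -1 := by
      refine tendsto_nhds_unique (h.comp hodd) ?_
      have hodd2 : ((fun k => (-1:ℝ) ^ k) ∘ fun k : ℕ => 2 * k + 1) = fun _ => (-1:ℝ) := by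
        funext k; simp [Function.comp_def, pow_succ, pow_mul]
      rw [hodd2]
      exact tendsto_const_nhds
    rw [hm1] at hm2; norm_num at hm2

theorem stmt_8 (n : ℕ) (hn : 2 ≤ n) (A : Matrix (Fin n) (Fin n) ℝ)
    (hnonneg : ∀ i j, 0 ≤ A i j)
    (hrow : ∀ i, ∑ j, A i j = 1)
    (hsym : A.IsSymm)
    (hirr : ∀ i j, 0 < (∑ k ∈ Finset.range n, A ^ k) i j)
    (lamn : ℝ)
    (hlamn : Module.End.HasEigenvalue (Matrix.toLin' A) lamn)
    (hmin : ∀ μ : ℝ, Module.End.HasEigenvalue (Matrix.toLin' A) μ → lamn ≤ μ)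
    (γ : ℝ)
    (Ahat : Matrix (Fin n ⊕ Fin n) (Fin n ⊕ Fin n) ℝ)
    (hAhat : Ahat = Matrix.fromBlocks (γ • A) ((1 - γ) • A) 1 0)
    (hconv : ∃ L : Matrix (Fin n ⊕ Fin n) (Fin n ⊕ Fin n) ℝ,
      Tendsto (fun k => Ahat ^ k) atTop (nhds L) ∧ L ≠ 0) :
    (0 < γ ∧ γ < 2) ∧ 2 * γ * lamn - lamn + 1 > 0 := by
  obtain ⟨L, hL, -⟩ := hconv
  -- master lemma: scalar recurrences coming from eigenvectors must converge
  have master : ∀ (lam : ℝ) (x : Fin n → ℝ), x ≠ 0 → A *ᵥ x = lam • x →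
      ∀ f g : ℕ → ℝ, (∀ k, f (k+1) = γ * lam * f k + (1-γ) * lam * g k) →
      (∀ k, g (k+1) = f k) → ∃ m : ℝ, Tendsto g atTop (nhds m) := by
    intro lam x hx heig f g hf hg
    have step : ∀ a b : ℝ, Ahat *ᵥ (Sum.elim (a • x) (b • x)) =
        Sum.elim ((γ * lam * a + (1-γ) * lam * b) • x) (a • x) := by
      intro a b
      rw [hAhat, fromBlocks_mulVec, Sum.elim_comp_inl, Sum.elim_comp_inr, smul_mulVec,
        smul_mulVec, mulVec_smul, mulVec_smul, heig, one_mulVec, zero_mulVec, add_zero]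
      ext j
      cases j with
      | inl j =>
        simp only [Sum.elim_inl, Pi.add_apply, Pi.smul_apply, smul_eq_mul]
        ring
      | inr j => simp
    set w : Fin n ⊕ Fin n → ℝ := Sum.elim (f 0 • x) (g 0 • x) with hw
    have powf : ∀ k, (Ahat ^ k) *ᵥ w = Sum.elim (f k • x) (g k • x) := by
      intro k
      induction k with
      | zero => simp [hw]
      | succ k ih =>
        rw [pow_succ', ← mulVec_mulVec, ih, step, hf, hg]
    have hm : Tendsto (fun k => (Ahat ^ k) *ᵥ w) atTop (nhds (L *ᵥ w)) := by
      exact ((continuous_id.matrix_mulVec continuous_const).tendsto L).comp hL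
    obtain ⟨i, hi⟩ := Function.ne_iff.mp hx
    have h2 : Tendsto (fun k => g k * x i) atTop (nhds ((L *ᵥ w) (Sum.inr i))) := by
      have := tendsto_pi_nhds.mp hm (Sum.inr i)
      simpa [powf] using this
    refine ⟨(L *ᵥ w) (Sum.inr i) * (x i)⁻¹, ?_⟩
    have := h2.mul_const (x i)⁻¹
    simpa [mul_assoc, mul_inv_cancel₀ hi] using this
  -- root bound
  have rootb : ∀ (lam : ℝ) (x : Fin n → ℝ), x ≠ 0 → A *ᵥ x = lam • x →
      ∀ r : ℝ, r ^ 2 = γ * lam * r + (1-γ) * lam → -1 < r ∧ r ≤ 1 := by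
    intro lam x hx heig r hr
    obtain ⟨m, hm⟩ := master lam x hx heig (fun k => r ^ (k+1)) (fun k => r ^ k)
      (fun k => by
        show r ^ (k+1+1) = γ * lam * r ^ (k+1) + (1-γ) * lam * r ^ k
        have h1 : r ^ (k+1+1) = r ^ k * r ^ 2 := by ring
        rw [h1, hr]; ring)
      (fun k => rfl)
    exact pow_conv_bounds hm
  -- the all-ones eigenvector with eigenvalue 1
  have hnpos : 0 < n := by omega
  have honez : (fun _ => (1:ℝ) : Fin n → ℝ) ≠ 0 := by
    intro h
    have := congrFun h ⟨0, hnpos⟩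
    simpa using this
  have hone : A *ᵥ (fun _ => (1:ℝ)) = (1:ℝ) • (fun _ => (1:ℝ)) := by
    ext i
    simp [mulVec, dotProduct, hrow i]
  have hγ1 := rootb 1 (fun _ => (1:ℝ)) honez hone (γ - 1) (by ring)
  -- γ ≠ 2 : Jordan block
  have hγne : γ ≠ 2 := by
    intro hγ2
    obtain ⟨m, hm⟩ := master 1 (fun _ => (1:ℝ)) honez hone
      (fun k => (k:ℝ) + 1) (fun k => (k:ℝ))
      (fun k => by subst hγ2; push_cast; ring) (fun k => by push_cast; ring)
    exact not_tendsto_atTop_of_tendsto_nhds hm tendsto_natCast_atTop_atTop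
  -- eigenvector for lamn
  obtain ⟨x, hx⟩ := hlamn.exists_hasEigenvector
  have heign : A *ᵥ x = lamn • x := by
    rw [← Matrix.toLin'_apply]; exact hx.apply_eq_smul
  have hpart2 : 2 * γ * lamn - lamn + 1 > 0 := by
    by_contra hc
    push_neg at hc
    set β := γ * lamn with hβ
    set δ := (1-γ) * lamn with hδ
    have hβδ : 1 + β - δ ≤ 0 := by rw [hβ, hδ]; nlinarith
    have hdisc : 0 ≤ β ^ 2 + 4 * δ := by nlinarith [sq_nonneg (β + 2)]
    set s := Real.sqrt (β ^ 2 + 4 * δ) with hsdef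
    have hs : s ^ 2 = β ^ 2 + 4 * δ := Real.sq_sqrt hdisc
    have hsnn : 0 ≤ s := Real.sqrt_nonneg _
    have hs2 : β + 2 ≤ s := by nlinarith [sq_nonneg (s - (β + 2)), sq_nonneg (s + (β + 2))]
    set r := (β - s) / 2 with hrdef
    have hroot : r ^ 2 = γ * lamn * r + (1-γ) * lamn := by
      rw [hrdef, ← hβ, ← hδ]
      linear_combination hs / 4
    have := rootb lamn x hx.2 heign r hroot
    have hr1 : r ≤ -1 := by rw [hrdef]; linarith
    linarith [this.1]
  refine ⟨⟨by linarith [hγ1.1], lt_of_le_of_ne (by linarith [hγ1.2]) hγne⟩, hpart2⟩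
end

section
/- Let A be a symmetric, irreducible, row-stochastic, nonnegative n×n real matrix with smallest eigenvalue λ_n, and let Â = [[γA, (1−γ)A],[I, 0]]. If γ ∈ (0,2) and 2γλ_n − λ_n + 1 > 0, then Â is semi-convergent, i.e. lim_{k→∞} Â^k exists and is nonzero. -/
/-!
Diagonalising the symmetric matrix `A = U diag(d) Uᵀ` block-diagonalises `Â`: after conjugating by
`diag(U, U)` and regrouping coordinates, `Â` is the direct sum of the `2 × 2` companion matrices
`[[γ d, (1 - γ) d], [1, 0]]` over the eigenvalues `d` of `A`, and `|d| ≤ 1` because `A` is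
stochastic. For `d = 1` the companion matrix has eigenvalues `1` and `γ - 1`, so its powers
converge to a projection. For `d < 1` the inequality `1 + (2γ - 1) d > 0` is the Jury criterion
placing both roots of `z² = γ d z + (1 - γ) d` strictly inside the unit disc, so by Gelfand's
formula the powers tend to zero. Hence `Âᵏ` converges; its limit fixes the all-ones vector, as
`Â` does, so it is nonzero.
-/

open Matrix Filter Topology

theorem norm_lt_one_of_sq_eq_mul_add {b c : ℝ} (hc : |c| < 1) (hb : |b| < 1 - c) {z : ℂ}
    (hz : z ^ 2 = b * z + c) : ‖z‖ < 1 := by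
  obtain ⟨x, y⟩ := z
  have hre : x ^ 2 - y ^ 2 = b * x + c := by
    simpa [Complex.mul_re, pow_two] using congrArg Complex.re hz
  have him : 2 * x * y = b * y := by
    have := congrArg Complex.im hz
    simp only [pow_two, Complex.mul_im, Complex.add_im, Complex.ofReal_im, Complex.ofReal_re]
      at this
    linarith
  have hnorm : ‖(⟨x, y⟩ : ℂ)‖ ^ 2 = x ^ 2 + y ^ 2 := by
    rw [← Complex.normSq_eq_norm_sq, Complex.normSq_mk]; ring
  obtain ⟨hc₁, hc₂⟩ := abs_lt.mp hc
  obtain ⟨hb₁, hb₂⟩ := abs_lt.mp hb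
  suffices x ^ 2 + y ^ 2 < 1 by nlinarith [norm_nonneg (⟨x, y⟩ : ℂ)]
  rcases eq_or_ne y 0 with rfl | hy
  · -- a real root of `x² - b x - c`, which is positive at `±1`
    have hx : x ^ 2 = b * x + c := by linarith
    have : x < 1 := by nlinarith
    have : -1 < x := by nlinarith
    nlinarith
  · -- a pair of conjugate roots, whose product is `-c`
    have hbx : b = 2 * x := (mul_right_cancel₀ hy (by linarith : 2 * x * y = b * y)).symm
    nlinarith

theorem sq_eq_of_mem_spectrum_companion {K : Type*} [Field K] {b c μ : K}
    (hμ : μ ∈ spectrum K !![b, c; 1, 0]) : μ ^ 2 = b * μ + c := by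
  rw [Matrix.mem_spectrum_iff_isRoot_charpoly, charpoly_fin_two, Polynomial.IsRoot.def] at hμ
  simp [Matrix.trace_fin_two, Matrix.det_fin_two] at hμ
  linear_combination hμ

theorem tendsto_pow_atTop_nhds_zero_of_spectralRadius_lt_one {A : Type*} [NormedRing A]
    [NormedAlgebra ℂ A] [CompleteSpace A] {a : A} (ha : spectralRadius ℂ a < 1) :
    Tendsto (a ^ ·) atTop (𝓝 0) := by
  obtain ⟨ρ, hρa, hρ1⟩ := ENNReal.lt_iff_exists_nnreal_btwn.mp ha
  have hbound : ∀ᶠ k : ℕ in atTop, ‖a ^ k‖ ≤ (ρ : ℝ) ^ k := by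
    have hgelfand := spectrum.pow_nnnorm_pow_one_div_tendsto_nhds_spectralRadius a
    filter_upwards [hgelfand.eventually_lt_const hρa, eventually_gt_atTop 0] with k hk hk0
    rw [one_div, ENNReal.rpow_inv_lt_iff (by positivity), ENNReal.rpow_natCast,
      ← ENNReal.coe_pow, ENNReal.coe_lt_coe] at hk
    exact_mod_cast hk.le
  exact squeeze_zero_norm' hbound
    (tendsto_pow_atTop_nhds_zero_of_lt_one ρ.coe_nonneg (by exact_mod_cast hρ1))

theorem tendsto_pow_atTop_nhds_zero_of_forall_mem_spectrum {A : Type*} [NormedRing A]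
    [NormedAlgebra ℂ A] [CompleteSpace A] {a : A} (ha : ∀ μ ∈ spectrum ℂ a, ‖μ‖ < 1) :
    Tendsto (a ^ ·) atTop (𝓝 0) := by
  rcases subsingleton_or_nontrivial A with hA | hA
  · simpa only [Subsingleton.elim _ (0 : A)] using tendsto_const_nhds
  refine tendsto_pow_atTop_nhds_zero_of_spectralRadius_lt_one ?_
  simpa using spectrum.spectralRadius_lt_of_forall_lt_of_nonempty (spectrum.nonempty a)
    (r := 1) fun μ hμ => by simpa [← NNReal.coe_lt_coe] using ha μ hμ

section MatrixNorm

-- A norm is chosen only to apply Banach-algebra results; it induces the product topology.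
attribute [local instance] Matrix.linftyOpNormedRing Matrix.linftyOpNormedAlgebra

theorem Matrix.tendsto_pow_atTop_nhds_zero_of_forall_mem_spectrum {ι : Type*} [Fintype ι]
    [DecidableEq ι] {M : Matrix ι ι ℂ} (hM : ∀ μ ∈ spectrum ℂ M, ‖μ‖ < 1) :
    Tendsto (M ^ ·) atTop (𝓝 0) :=
  _root_.tendsto_pow_atTop_nhds_zero_of_forall_mem_spectrum hM

theorem Matrix.abs_le_one_of_mem_spectrum_of_mem_rowStochastic {ι : Type*} [Fintype ι]
    [DecidableEq ι] {M : Matrix ι ι ℝ} (hM : M ∈ rowStochastic ℝ ι) {μ : ℝ}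
    (hμ : μ ∈ spectrum ℝ M) : |μ| ≤ 1 := by
  rcases isEmpty_or_nonempty ι with hι | hι
  · simp [spectrum.of_subsingleton] at hμ
  calc |μ| = ‖μ‖ := rfl
    _ ≤ ‖M‖ := spectrum.norm_le_norm_of_mem hμ
    _ ≤ 1 := by
      rw [linfty_opNorm_def, NNReal.coe_le_one, Finset.sup_le_iff]
      intro i _
      rw [← NNReal.coe_le_coe]
      simp [abs_of_nonneg (nonneg_of_mem_rowStochastic hM), sum_row_of_mem_rowStochastic hM i]

end MatrixNorm

theorem tendsto_pow_companion_nhds_zero {b c : ℝ} (hc : |c| < 1) (hb : |b| < 1 - c) :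
    Tendsto (!![b, c; 1, 0] ^ ·) atTop (𝓝 0) := by
  set M : Matrix (Fin 2) (Fin 2) ℝ := !![b, c; 1, 0]
  have hMℂ : M.map Complex.ofRealHom = !![(b : ℂ), c; 1, 0] := by
    ext i j; fin_cases i <;> fin_cases j <;> simp [M]
  have hspec : ∀ μ ∈ spectrum ℂ (M.map Complex.ofRealHom), ‖μ‖ < 1 := fun μ hμ =>
    norm_lt_one_of_sq_eq_mul_add hc hb (sq_eq_of_mem_spectrum_companion (hMℂ ▸ hμ))
  have hpow : ∀ k, M ^ k = ((M.map Complex.ofRealHom) ^ k).map Complex.re := by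
    intro k; rw [← Matrix.map_pow]; ext; simp
  simp_rw [hpow]
  have hre : Tendsto (fun N : Matrix (Fin 2) (Fin 2) ℂ => N.map Complex.re) (𝓝 0) (𝓝 0) := by
    simpa using (continuous_id.matrix_map Complex.continuous_re).tendsto 0
  exact hre.comp (Matrix.tendsto_pow_atTop_nhds_zero_of_forall_mem_spectrum hspec)

theorem tendsto_pow_companion_of_add_eq_one {b c : ℝ} (hbc : b + c = 1) (hc : |c| < 1) :
    Tendsto (!![b, c; 1, 0] ^ ·) atTop (𝓝 ((1 + c)⁻¹ • !![1, c; 1, c])) := by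
  obtain rfl : b = 1 - c := by linarith
  set C : Matrix (Fin 2) (Fin 2) ℝ := !![1 - c, c; 1, 0]
  set P : Matrix (Fin 2) (Fin 2) ℝ := (1 + c)⁻¹ • !![1, c; 1, c]
  have hc1 : 1 + c ≠ 0 := by linarith [(abs_lt.mp hc).1]
  -- `P` is the spectral projection onto the eigenvalue `1`; the other eigenvalue is `-c`
  have hCP : C * P = P := by
    ext i j; fin_cases i <;> fin_cases j <;> simp [C, P, Matrix.mul_apply] <;> field_simp <;> ring
  have hCQ : C * (1 - P) = (-c) • (1 - P) := by
    rw [Matrix.mul_sub, Matrix.mul_one, hCP]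
    ext i j; fin_cases i <;> fin_cases j <;> simp [C, P] <;> field_simp <;> ring
  have hpow : ∀ k, C ^ k = P + (-c) ^ k • (1 - P) := by
    intro k
    induction k with
    | zero => simp
    | succ k ih =>
      rw [pow_succ', ih, Matrix.mul_add, hCP, Matrix.mul_smul, hCQ, smul_smul, pow_succ]
  simp_rw [hpow]
  simpa using tendsto_const_nhds.add
    ((tendsto_pow_atTop_nhds_zero_of_abs_lt_one (by rwa [abs_neg])).smul_const (1 - P))

theorem exists_tendsto_pow_companion {γ d : ℝ} (hγ : |1 - γ| < 1) (hd : |d| ≤ 1)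
    (hcrit : 0 < 1 + (2 * γ - 1) * d) :
    ∃ P, Tendsto (!![γ * d, (1 - γ) * d; 1, 0] ^ ·) atTop (𝓝 P) := by
  obtain ⟨hd₁, hd₂⟩ := abs_le.mp hd
  rcases hd₂.eq_or_lt with rfl | hd₂
  · simpa using ⟨_, tendsto_pow_companion_of_add_eq_one (by ring) hγ⟩
  · obtain ⟨hγ₁, hγ₂⟩ := abs_lt.mp hγ
    refine ⟨0, tendsto_pow_companion_nhds_zero ?_ ?_⟩
    · rw [abs_lt]; constructor <;> nlinarith
    · rw [abs_lt]; constructor <;> nlinarith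

namespace Matrix

variable {ι α : Type*}

theorem mulVec_eq_of_tendsto_pow {R : Type*} [Fintype ι] [DecidableEq ι] [Semiring R]
    [TopologicalSpace R] [IsTopologicalSemiring R] [T2Space R] {M L : Matrix ι ι R} {v : ι → R}
    (hv : M *ᵥ v = v) (hL : Tendsto (M ^ ·) atTop (𝓝 L)) : L *ᵥ v = v := by
  have hpow : ∀ k, (M ^ k) *ᵥ v = v := by
    intro k
    induction k with
    | zero => simp
    | succ k ih => rw [pow_succ, ← mulVec_mulVec, hv, ih]
  have hlim : Tendsto (fun k => (M ^ k) *ᵥ v) atTop (𝓝 (L *ᵥ v)) :=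
    ((continuous_id.matrix_mulVec continuous_const).tendsto L).comp hL
  simp only [hpow] at hlim
  exact tendsto_nhds_unique hlim tendsto_const_nhds

-- `(0, i) ↦ inl i` and `(1, i) ↦ inr i`
def finTwoProdEquivSum (ι : Type*) : Fin 2 × ι ≃ ι ⊕ ι :=
  (finTwoEquiv.prodCongr (Equiv.refl ι)).trans (Equiv.boolProdEquivSum ι)

theorem fromBlocks_diagonal_eq_reindex_blockDiagonal [DecidableEq ι] [Zero α]
    (p q r s : ι → α) :
    fromBlocks (diagonal p) (diagonal q) (diagonal r) (diagonal s) =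
      reindex (finTwoProdEquivSum ι) (finTwoProdEquivSum ι)
        (blockDiagonal fun l => !![p l, q l; r l, s l]) := by
  ext (i | i) (j | j) <;>
    simp [finTwoProdEquivSum, finTwoEquiv, blockDiagonal_apply, diagonal_apply]

variable [Fintype ι] [DecidableEq ι] [CommRing α] [StarRing α]

theorem fromBlocks_mem_unitary {U : Matrix ι ι α} (hU : U ∈ unitary (Matrix ι ι α)) :
    fromBlocks U 0 0 U ∈ unitary (Matrix (ι ⊕ ι) (ι ⊕ ι) α) := by
  rw [Unitary.mem_iff] at hU ⊢
  simp only [star_eq_conjTranspose] at hU ⊢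
  simp [fromBlocks_conjTranspose, fromBlocks_multiply, hU.1, hU.2]

def fromBlocksUnitary (U : unitary (Matrix ι ι α)) : unitary (Matrix (ι ⊕ ι) (ι ⊕ ι) α) :=
  ⟨fromBlocks U 0 0 U, fromBlocks_mem_unitary U.2⟩

theorem conjStarAlgAut_fromBlocksUnitary (U : unitary (Matrix ι ι α))
    (P Q R S : Matrix ι ι α) :
    Unitary.conjStarAlgAut α _ (fromBlocksUnitary U) (fromBlocks P Q R S) =
      fromBlocks (Unitary.conjStarAlgAut α _ U P) (Unitary.conjStarAlgAut α _ U Q)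
        (Unitary.conjStarAlgAut α _ U R) (Unitary.conjStarAlgAut α _ U S) := by
  simp [Unitary.conjStarAlgAut_apply, fromBlocksUnitary, star_eq_conjTranspose,
    fromBlocks_conjTranspose, fromBlocks_multiply]

theorem exists_tendsto_pow_fromBlocks_smul {A : Matrix ι ι ℝ} (hA : A.IsHermitian)
    {a b : ℝ} (h : ∀ l, ∃ P, Tendsto
      (!![a * hA.eigenvalues l, b * hA.eigenvalues l; 1, 0] ^ ·) atTop (𝓝 P)) :
    ∃ L, Tendsto ((fromBlocks (a • A) (b • A) 1 0 : Matrix (ι ⊕ ι) (ι ⊕ ι) ℝ) ^ ·) atTop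
      (𝓝 L) := by
  choose P hP using h
  set V := fromBlocksUnitary hA.eigenvectorUnitary
  set Φ := fun X => Unitary.conjStarAlgAut ℝ _ V (reindexAlgEquiv ℝ ℝ (finTwoProdEquivSum ι) X)
  have hΦ : Continuous Φ := by
    simp only [Φ, Unitary.conjStarAlgAut_apply, coe_reindexAlgEquiv]
    fun_prop
  have hblock : (fromBlocks (a • A) (b • A) 1 0 : Matrix (ι ⊕ ι) (ι ⊕ ι) ℝ) =
      Φ (blockDiagonal fun l => !![a * hA.eigenvalues l, b * hA.eigenvalues l; 1, 0]) := by
    have hdiag : ∀ c : ℝ, c • A = Unitary.conjStarAlgAut ℝ _ hA.eigenvectorUnitary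
        (diagonal (c • hA.eigenvalues)) := by
      intro c
      conv_lhs => rw [hA.spectral_theorem]
      rw [← map_smul, ← diagonal_smul]
      rfl
    have hreindex := fromBlocks_diagonal_eq_reindex_blockDiagonal
      (a • hA.eigenvalues) (b • hA.eigenvalues) 1 0
    simp only [Pi.smul_apply, smul_eq_mul, Pi.one_apply, Pi.zero_apply] at hreindex
    simp only [Φ, coe_reindexAlgEquiv]
    rw [← hreindex, conjStarAlgAut_fromBlocksUnitary, ← hdiag, ← hdiag]
    simp
  refine ⟨Φ (blockDiagonal P), ?_⟩
  simp_rw [hblock, Φ, ← map_pow, ← blockDiagonal_pow]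
  exact (hΦ.tendsto _).comp
    ((continuous_id.matrix_blockDiagonal.tendsto _).comp (tendsto_pi_nhds.mpr hP))

end Matrix

theorem stmt_9_general (n : ℕ) (hn : 2 ≤ n) (A : Matrix (Fin n) (Fin n) ℝ)
    (hnonneg : ∀ i j, 0 ≤ A i j)
    (hrow : ∀ i, ∑ j, A i j = 1)
    (hsym : A.IsSymm)
    (lamn : ℝ)
    (hmin : ∀ μ : ℝ, Module.End.HasEigenvalue (Matrix.toLin' A) μ → lamn ≤ μ)
    (γ : ℝ) (hγ : 0 < γ) (hγ' : γ < 2) (hcrit : 2 * γ * lamn - lamn + 1 > 0)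
    (Ahat : Matrix (Fin n ⊕ Fin n) (Fin n ⊕ Fin n) ℝ)
    (hAhat : Ahat = Matrix.fromBlocks (γ • A) ((1 - γ) • A) 1 0) :
    ∃ L : Matrix (Fin n ⊕ Fin n) (Fin n ⊕ Fin n) ℝ,
      Tendsto (fun k => Ahat ^ k) atTop (nhds L) ∧ L ≠ 0 := by
  have hA : A.IsHermitian := isHermitian_iff_isSymm.mpr hsym
  have hstoch : A ∈ rowStochastic ℝ (Fin n) := mem_rowStochastic_iff_sum.mpr ⟨hnonneg, hrow⟩
  have hconv : ∀ l, ∃ P, Tendsto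
      (!![γ * hA.eigenvalues l, (1 - γ) * hA.eigenvalues l; 1, 0] ^ ·) atTop (𝓝 P) := by
    intro l
    have hmem := hA.eigenvalues_mem_spectrum_real l
    have hd := abs_le_one_of_mem_spectrum_of_mem_rowStochastic hstoch hmem
    have hlow : lamn ≤ hA.eigenvalues l :=
      hmin _ (Module.End.hasEigenvalue_iff_mem_spectrum.mpr (by rwa [spectrum_toLin']))
    refine exists_tendsto_pow_companion (abs_lt.mpr ⟨by linarith, by linarith⟩) hd ?_
    -- `1 + (2γ - 1) d` is affine in `d` and positive at both `d = lamn` and `d = 1`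
    rcases le_total 0 (2 * γ - 1) with h | h
    · nlinarith
    · nlinarith [(abs_le.mp hd).2]
  obtain ⟨L, hL⟩ := exists_tendsto_pow_fromBlocks_smul hA hconv
  subst hAhat
  refine ⟨L, hL, fun hL0 => ?_⟩
  have hfix : (fromBlocks (γ • A) ((1 - γ) • A) 1 0 : Matrix (Fin n ⊕ Fin n) (Fin n ⊕ Fin n) ℝ)
      *ᵥ 1 = 1 := by
    simp [fromBlocks_mulVec, smul_mulVec, one_vecMul_of_mem_rowStochastic hstoch]
  have hLfix := mulVec_eq_of_tendsto_pow hfix hL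
  have : Nonempty (Fin n) := ⟨⟨0, by omega⟩⟩
  simp [hL0] at hLfix

theorem stmt_9 (n : ℕ) (hn : 2 ≤ n) (A : Matrix (Fin n) (Fin n) ℝ)
    (hnonneg : ∀ i j, 0 ≤ A i j)
    (hrow : ∀ i, ∑ j, A i j = 1)
    (hsym : A.IsSymm)
    (hirr : ∀ i j, 0 < (∑ k ∈ Finset.range n, A ^ k) i j)
    (lamn : ℝ)
    (hlamn : Module.End.HasEigenvalue (Matrix.toLin' A) lamn)
    (hmin : ∀ μ : ℝ, Module.End.HasEigenvalue (Matrix.toLin' A) μ → lamn ≤ μ)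
    (γ : ℝ) (hγ : 0 < γ) (hγ' : γ < 2) (hcrit : 2 * γ * lamn - lamn + 1 > 0)
    (Ahat : Matrix (Fin n ⊕ Fin n) (Fin n ⊕ Fin n) ℝ)
    (hAhat : Ahat = Matrix.fromBlocks (γ • A) ((1 - γ) • A) 1 0) :
    ∃ L : Matrix (Fin n ⊕ Fin n) (Fin n ⊕ Fin n) ℝ,
      Tendsto (fun k => Ahat ^ k) atTop (nhds L) ∧ L ≠ 0 :=
  stmt_9_general n hn A hnonneg hrow hsym lamn hmin γ hγ hγ' hcrit Ahat hAhat
end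

section
/- If γ = 2, the eigenvalue 1 of the matrix Â = [[2A, −A],[I, 0]] has geometric multiplicity equal to the geometric multiplicity of the eigenvalue 1 of A; in particular if 1 is a simple eigenvalue of A, then Â is not semi-convergent (since 1 has algebraic multiplicity 2 in Â). -/
open Matrix Filter Module.End

private lemma mem_hat_iff {n : ℕ} (A : Matrix (Fin n) (Fin n) ℝ) (v : Fin n ⊕ Fin n → ℝ) :
    v ∈ Module.End.eigenspace
        (Matrix.toLin' (Matrix.fromBlocks ((2 : ℝ) • A) (-A) 1 0)) 1 ↔
      A *ᵥ (v ∘ Sum.inl) = v ∘ Sum.inl ∧ v ∘ Sum.inr = v ∘ Sum.inl := by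
  rw [Module.End.mem_eigenspace_iff, Matrix.toLin'_apply, one_smul,
    Matrix.fromBlocks_mulVec, Matrix.smul_mulVec, Matrix.neg_mulVec,
    Matrix.one_mulVec, Matrix.zero_mulVec, add_zero]
  constructor
  · intro h
    have h1 : (2 : ℝ) • A *ᵥ v ∘ Sum.inl + -(A *ᵥ v ∘ Sum.inr) = v ∘ Sum.inl := by
      funext i; exact congrFun h (Sum.inl i)
    have h2 : v ∘ Sum.inl = v ∘ Sum.inr := by
      funext i; exact congrFun h (Sum.inr i)
    rw [← h2] at h1
    have hA : A *ᵥ v ∘ Sum.inl = v ∘ Sum.inl := by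
      have := h1
      rw [two_smul] at this
      linear_combination (norm := module) this
    exact ⟨hA, h2.symm⟩
  · rintro ⟨h1, h2⟩
    rw [h2, h1]
    funext i
    cases i with
    | inl i => simp [two_smul]
    | inr i => exact (congrFun h2 i).symm

theorem stmt_10 (n : ℕ) (hn : 2 ≤ n) (A : Matrix (Fin n) (Fin n) ℝ)
    (hnonneg : ∀ i j, 0 ≤ A i j)
    (hrow : ∀ i, ∑ j, A i j = 1)
    (hsym : A.IsSymm)
    (hirr : ∀ i j, 0 < (∑ k ∈ Finset.range n, A ^ k) i j)
    (Ahat : Matrix (Fin n ⊕ Fin n) (Fin n ⊕ Fin n) ℝ)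
    (hAhat : Ahat = Matrix.fromBlocks ((2 : ℝ) • A) (-A) 1 0) :
    Module.finrank ℝ (Module.End.eigenspace (Matrix.toLin' Ahat) 1) =
      Module.finrank ℝ (Module.End.eigenspace (Matrix.toLin' A) 1) ∧
    (Module.finrank ℝ (Module.End.eigenspace (Matrix.toLin' A) 1) = 1 →
      ¬ ∃ L : Matrix (Fin n ⊕ Fin n) (Fin n ⊕ Fin n) ℝ,
        Tendsto (fun k => Ahat ^ k) atTop (nhds L) ∧ L ≠ 0) := by
  subst hAhat
  have i0 : Fin n := ⟨0, by omega⟩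
  constructor
  · -- geometric multiplicities agree
    refine LinearEquiv.finrank_eq ?_ |>.symm
    exact
      { toFun := fun x =>
          ⟨Sum.elim x.1 x.1, by
            rw [mem_hat_iff]
            have hx := Module.End.mem_eigenspace_iff.mp x.2
            rw [Matrix.toLin'_apply, one_smul] at hx
            constructor
            · simpa using hx
            · funext i; simp⟩
        map_add' := by
          intro x y
          ext i
          cases i <;> simp
        map_smul' := by
          intro c x
          ext i
          cases i <;> simp
        invFun := fun v =>
          ⟨v.1 ∘ Sum.inl, by
            have h := (mem_hat_iff A v.1).mp v.2
            rw [Module.End.mem_eigenspace_iff, Matrix.toLin'_apply, one_smul]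
            exact h.1⟩
        left_inv := by
          intro x
          ext i
          simp
        right_inv := by
          intro v
          have h := (mem_hat_iff A v.1).mp v.2
          ext i
          cases i with
          | inl i => simp
          | inr i =>
            have := congrFun h.2 i
            simpa using this.symm }
  · intro _ ⟨L, hL, _⟩
    set x : Fin n → ℝ := fun _ => (1 : ℝ) with hxdef
    have hx : A *ᵥ x = x := by
      funext i
      simp [Matrix.mulVec, dotProduct, hxdef, hrow i]
    set v1 : Fin n ⊕ Fin n → ℝ := Sum.elim x x with hv1
    set v2 : Fin n ⊕ Fin n → ℝ := Sum.elim x 0 with hv2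
    set Ahat : Matrix (Fin n ⊕ Fin n) (Fin n ⊕ Fin n) ℝ :=
      Matrix.fromBlocks ((2 : ℝ) • A) (-A) 1 0 with hAh
    have h1 : Ahat *ᵥ v1 = v1 := by
      rw [hAh, Matrix.fromBlocks_mulVec]
      funext i
      cases i with
      | inl i =>
        simp [hv1, Matrix.smul_mulVec, Matrix.neg_mulVec, hx, two_smul, Matrix.add_mulVec]
      | inr i => simp [hv1]
    have h2 : Ahat *ᵥ v2 = v2 + v1 := by
      rw [hAh, Matrix.fromBlocks_mulVec]
      funext i
      cases i with
      | inl i =>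
        simp [hv1, hv2, Matrix.smul_mulVec, Matrix.neg_mulVec, hx, two_smul, Matrix.add_mulVec]
      | inr i => simp [hv1, hv2]
    have hk : ∀ k : ℕ, (Ahat ^ k) *ᵥ v2 = v2 + (k : ℝ) • v1 := by
      intro k
      induction k with
      | zero => simp
      | succ k ih =>
        rw [pow_succ', ← Matrix.mulVec_mulVec, ih, Matrix.mulVec_add,
          Matrix.mulVec_smul, h1, h2]
        push_cast
        module
    have hcont : Tendsto (fun k => (Ahat ^ k) *ᵥ v2) atTop (nhds (L *ᵥ v2)) := by
      have hc : Continuous fun M : Matrix (Fin n ⊕ Fin n) (Fin n ⊕ Fin n) ℝ => M *ᵥ v2 :=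
        Continuous.matrix_mulVec continuous_id continuous_const
      exact (hc.tendsto L).comp hL
    have hcomp : Tendsto (fun k => ((Ahat ^ k) *ᵥ v2) (Sum.inl i0)) atTop
        (nhds ((L *ᵥ v2) (Sum.inl i0))) :=
      ((continuous_apply (Sum.inl i0)).tendsto _).comp hcont
    have heq : (fun k : ℕ => ((Ahat ^ k) *ᵥ v2) (Sum.inl i0)) =
        fun k : ℕ => 1 + (k : ℝ) := by
      funext k
      rw [hk k]
      simp [hv1, hv2, hxdef]
    rw [heq] at hcomp
    have hdiv : Tendsto (fun k : ℕ => 1 + (k : ℝ)) atTop atTop :=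
      tendsto_atTop_add_const_left _ 1 tendsto_natCast_atTop_atTop
    exact not_tendsto_atTop_of_tendsto_nhds hcomp hdiv
end

section
/- Let A be a symmetric, irreducible, row-stochastic nonnegative matrix whose associated graph is periodic, i.e. −1 is an eigenvalue of A. Then the accelerated-averaging augmented matrix A_β = [[βA, (1−β)I],[I, 0]] has −1 as an eigenvalue for every β ∈ ℝ, and hence A_β is not semi-convergent for any β. -/
open Matrix Filter

theorem stmt_11 (n : ℕ) (hn : 2 ≤ n) (A : Matrix (Fin n) (Fin n) ℝ)
    (hnonneg : ∀ i j, 0 ≤ A i j)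
    (hrow : ∀ i, ∑ j, A i j = 1)
    (hsym : A.IsSymm)
    (hirr : ∀ i j, 0 < (∑ k ∈ Finset.range n, A ^ k) i j)
    (hper : Module.End.HasEigenvalue (Matrix.toLin' A) (-1))
    (β : ℝ)
    (Aβ : Matrix (Fin n ⊕ Fin n) (Fin n ⊕ Fin n) ℝ)
    (hAβ : Aβ = Matrix.fromBlocks (β • A) ((1 - β) • (1 : Matrix (Fin n) (Fin n) ℝ)) 1 0) :
    Module.End.HasEigenvalue (Matrix.toLin' Aβ) (-1) ∧
      ¬ ∃ L : Matrix (Fin n ⊕ Fin n) (Fin n ⊕ Fin n) ℝ,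
        Tendsto (fun k => Aβ ^ k) atTop (nhds L) ∧ L ≠ 0 := by
  obtain ⟨v, hv⟩ := hper.exists_hasEigenvector
  have hv0 : v ≠ 0 := hv.right
  have hAv : A *ᵥ v = -v := by
    have := hv.apply_eq_smul
    rw [Matrix.toLin'_apply] at this
    simpa using this
  set w : (Fin n ⊕ Fin n) → ℝ := Sum.elim v (-v) with hw
  have hw0 : w ≠ 0 := by
    intro h
    apply hv0
    funext i
    have := congrFun h (Sum.inl i)
    simpa [hw] using this
  have hkey : Aβ *ᵥ w = -w := by
    rw [hAβ, hw]
    rw [Matrix.fromBlocks_mulVec]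
    simp only [Sum.elim_comp_inl, Sum.elim_comp_inr]
    have h1 : (β • A) *ᵥ v + ((1 - β) • (1 : Matrix (Fin n) (Fin n) ℝ)) *ᵥ (-v) = -v := by
      simp [Matrix.smul_mulVec, hAv, Matrix.one_mulVec]
      module
    have h2 : (1 : Matrix (Fin n) (Fin n) ℝ) *ᵥ v + (0 : Matrix (Fin n) (Fin n) ℝ) *ᵥ (-v) = v := by
      simp [Matrix.one_mulVec]
    rw [h1, h2]
    funext i
    cases i <;> simp
  have heig : Module.End.HasEigenvalue (Matrix.toLin' Aβ) (-1) := by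
    apply Module.End.hasEigenvalue_of_hasEigenvector (x := w)
    constructor
    · rw [Module.End.mem_eigenspace_iff, Matrix.toLin'_apply, hkey]
      simp
    · exact hw0
  refine ⟨heig, ?_⟩
  rintro ⟨L, hL, -⟩
  have hpow : ∀ k, (Aβ ^ k) *ᵥ w = ((-1 : ℝ) ^ k) • w := by
    intro k
    induction k with
    | zero => simp
    | succ k ih =>
      rw [pow_succ', ← Matrix.mulVec_mulVec, ih, Matrix.mulVec_smul, hkey, pow_succ']
      module
  have hc : Continuous fun M : Matrix (Fin n ⊕ Fin n) (Fin n ⊕ Fin n) ℝ => M *ᵥ w :=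
    continuous_id.matrix_mulVec continuous_const
  have hlim : Tendsto (fun k => ((-1 : ℝ) ^ k) • w) atTop (nhds (L *ᵥ w)) := by
    have := ((hc.tendsto L).comp hL)
    simpa [Function.comp_def, hpow] using this
  have h2k : Tendsto (fun k : ℕ => 2 * k) atTop atTop :=
    tendsto_atTop_mono (fun k => by simp; omega) tendsto_id
  have h2k1 : Tendsto (fun k : ℕ => 2 * k + 1) atTop atTop :=
    tendsto_atTop_mono (fun k => by simp; omega) tendsto_id
  have heven : Tendsto (fun k : ℕ => ((-1 : ℝ) ^ (2 * k)) • w) atTop (nhds (L *ᵥ w)) :=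
    hlim.comp h2k
  have hodd : Tendsto (fun k : ℕ => ((-1 : ℝ) ^ (2 * k + 1)) • w) atTop (nhds (L *ᵥ w)) :=
    hlim.comp h2k1
  have he : Tendsto (fun _ : ℕ => w) atTop (nhds (L *ᵥ w)) := by
    simpa [pow_mul] using heven
  have ho : Tendsto (fun _ : ℕ => -w) atTop (nhds (L *ᵥ w)) := by
    simpa [pow_succ, pow_mul] using hodd
  have h1 : w = L *ᵥ w := tendsto_nhds_unique tendsto_const_nhds he
  have h2 : -w = L *ᵥ w := tendsto_nhds_unique tendsto_const_nhds ho
  apply hw0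
  have hww : w = -w := h1.trans h2.symm
  funext i
  have hh := congrFun hww i
  simp only [Pi.neg_apply] at hh
  simp only [Pi.zero_apply]
  linarith
end

section
/- Let A be symmetric, irreducible, row-stochastic and nonnegative, and suppose γ ∈ (0,2) and 2γλ_n − λ_n + 1 > 0 so that Â = [[γA, (1−γ)A],[I,0]] is semi-convergent. Then for initial condition x̂(0) = [x₀; x₀], the iterates x̂(k) = Â^k x̂(0) converge to (w₁ᵀ x₀)·𝟙_{2n}, where w₁ is the left eigenvector of A for eigenvalue 1 normalized so that w₁ᵀ𝟙 = 1. -/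
/-!
Diagonalise the symmetric matrix `A` in an orthonormal eigenbasis. Started at `[v; v]` for an
eigenvector `v` of eigenvalue `μ`, the iteration stays of the form `[a (k + 1) • v; a k • v]`,
where `a 0 = a 1 = 1` and `a (k + 2) = γ μ a (k + 1) + (1 - γ) μ a k`. For `μ = 1` this sequence is
constantly `1`. Otherwise `λₙ ≤ μ < 1`, and the hypotheses on `γ` and `λₙ` are exactly the
Schur–Cohn conditions placing both roots of `z² - γ μ z - (1 - γ) μ` in the open unit disc, so
`a k → 0`. Hence the iterates converge. Their limit is a fixed point of `Â`, so both of its blocks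
equal one fixed vector of `A`, which is constant by irreducibility. The constant is determined by
the invariant `w₁ ⬝ᵥ x (k + 1) + (1 - γ) w₁ ⬝ᵥ x k` of the iteration, which starts at
`(2 - γ) w₁ ⬝ᵥ x₀`.
-/

open Filter Topology Matrix

theorem tendsto_zero_of_linearRecurrence_of_norm_lt_one {𝕜 : Type*} [NormedField 𝕜]
    {t₁ t₂ : 𝕜} (h₁ : ‖t₁‖ < 1) (h₂ : ‖t₂‖ < 1) {u : ℕ → 𝕜}
    (hu : ∀ k, u (k + 2) = (t₁ + t₂) * u (k + 1) - t₁ * t₂ * u k) :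
    Tendsto u atTop (𝓝 0) := by
  set r := max (max ‖t₁‖ ‖t₂‖) (1 / 2)
  have hr₀ : 0 < r := lt_max_of_lt_right one_half_pos
  have hr₁ : r < 1 := max_lt (max_lt h₁ h₂) one_half_lt_one
  set d := u 1 - t₁ * u 0
  -- `u (k + 1) - t₁ * u k` is a geometric sequence of ratio `t₂`
  have hstep : ∀ k, u (k + 1) = t₁ * u k + t₂ ^ k * d := by
    intro k
    induction k with
    | zero => simp [d]
    | succ k ih => rw [hu, ih, pow_succ]; ring
  have hbound : ∀ k : ℕ, ‖u k‖ ≤ (‖u 0‖ + k * (‖d‖ / r)) * r ^ k := by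
    intro k
    induction k with
    | zero => simp
    | succ k ih =>
      have ht₁ : ‖t₁‖ ≤ r := (le_max_left _ _).trans (le_max_left _ _)
      have ht₂ : ‖t₂‖ ^ k ≤ r ^ k :=
        pow_le_pow_left₀ (norm_nonneg _) ((le_max_right _ _).trans (le_max_left _ _)) k
      calc ‖u (k + 1)‖ ≤ ‖t₁‖ * ‖u k‖ + ‖t₂‖ ^ k * ‖d‖ := by
            rw [hstep, ← norm_pow, ← norm_mul, ← norm_mul]; exact norm_add_le _ _
        _ ≤ r * ((‖u 0‖ + k * (‖d‖ / r)) * r ^ k) + r ^ k * ‖d‖ := by gcongr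
        _ = (‖u 0‖ + (k + 1 : ℕ) * (‖d‖ / r)) * r ^ (k + 1) := by
            field_simp; push_cast; ring
  refine squeeze_zero_norm hbound ?_
  have hgeom := tendsto_pow_atTop_nhds_zero_of_lt_one hr₀.le hr₁
  have hkgeom := tendsto_self_mul_const_pow_of_lt_one hr₀.le hr₁
  simpa [add_mul, mul_right_comm _ (‖d‖ / r)] using
    (hgeom.const_mul ‖u 0‖).add (hkgeom.mul_const (‖d‖ / r))

theorem Complex.norm_lt_one_of_sq_eq {b c : ℝ} (hc : |c| < 1) (h₁ : b + c < 1) (h₂ : c - b < 1)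
    {t : ℂ} (ht : t ^ 2 = b * t + c) : ‖t‖ < 1 := by
  have hre := congrArg Complex.re ht
  have him := congrArg Complex.im ht
  simp only [sq, Complex.mul_re, Complex.mul_im, Complex.ofReal_re, Complex.ofReal_im,
    Complex.add_re, Complex.add_im] at hre him
  obtain ⟨hc₁, hc₂⟩ := abs_lt.mp hc
  by_cases hreal : t.im = 0
  · rw [← Complex.re_add_im t, hreal, Complex.ofReal_zero, zero_mul, add_zero, Complex.norm_real,
      Real.norm_eq_abs, abs_lt]
    rw [hreal] at hre
    -- with `s = b - t` the other root, `(1 - t) (1 - s) = 1 - b - c > 0`,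
    -- `(1 + t) (1 + s) = 1 + b - c > 0` and `|t s| = |c| < 1`
    constructor <;> nlinarith
  · have hx : t.re = b / 2 := by
      have : (2 * t.re - b) * t.im = 0 := by linarith
      rcases mul_eq_zero.mp this with h | h
      · linarith
      · exact absurd h hreal
    have hnorm : ‖t‖ ^ 2 = -c := by
      rw [Complex.sq_norm, Complex.normSq_apply]
      nlinarith
    nlinarith [norm_nonneg t]

theorem tendsto_zero_of_linearRecurrence_of_schur {b c : ℝ} (hc : |c| < 1) (h₁ : b + c < 1)
    (h₂ : c - b < 1) {a : ℕ → ℝ} (ha : ∀ k, a (k + 2) = b * a (k + 1) + c * a k) :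
    Tendsto a atTop (𝓝 0) := by
  obtain ⟨s, hs⟩ := IsAlgClosed.exists_pow_nat_eq ((b : ℂ) ^ 2 + 4 * c) two_pos
  have hroot : ∀ t : ℂ, t = (b + s) / 2 ∨ t = (b - s) / 2 → ‖t‖ < 1 := by
    rintro t (rfl | rfl) <;>
      exact Complex.norm_lt_one_of_sq_eq hc h₁ h₂ (by linear_combination hs / 4)
  rw [← tendsto_ofReal_iff, Complex.ofReal_zero]
  refine tendsto_zero_of_linearRecurrence_of_norm_lt_one (hroot _ (.inl rfl)) (hroot _ (.inr rfl))
    fun k => ?_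
  push_cast [ha]
  linear_combination -(a k : ℂ) * hs / 4

def secondOrderSeq (b c : ℝ) : ℕ → ℝ
  | 0 => 1
  | 1 => 1
  | k + 2 => b * secondOrderSeq b c (k + 1) + c * secondOrderSeq b c k

theorem secondOrderSeq_eq_one {b c : ℝ} (h : b + c = 1) (k : ℕ) : secondOrderSeq b c k = 1 := by
  induction k using Nat.twoStepInduction with
  | zero => rfl
  | one => rfl
  | more k ih₀ ih₁ => simp only [secondOrderSeq, ih₀, ih₁]; linarith

section orbits

variable {R ι : Type*} [CommRing R] [TopologicalSpace R] [IsTopologicalRing R] [Fintype ι]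
  [DecidableEq ι]

def convergentOrbits (M : Matrix ι ι R) : Submodule R (ι → R) where
  carrier := {x | ∃ L, Tendsto (fun k => M ^ k *ᵥ x) atTop (𝓝 L)}
  add_mem' := by
    rintro x y ⟨L, hL⟩ ⟨L', hL'⟩
    exact ⟨L + L', by simpa only [mulVec_add] using hL.add hL'⟩
  zero_mem' := ⟨0, by simpa only [mulVec_zero] using tendsto_const_nhds⟩
  smul_mem' := by
    rintro c x ⟨L, hL⟩
    exact ⟨c • L, by simpa only [mulVec_smul] using hL.const_smul c⟩

variable [T2Space R] {M : Matrix ι ι R} {x L : ι → R}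

theorem mulVec_eq_self_of_tendsto_pow_mulVec (h : Tendsto (fun k => M ^ k *ᵥ x) atTop (𝓝 L)) :
    M *ᵥ L = L := by
  have hshift : Tendsto (fun k => M *ᵥ (M ^ k *ᵥ x)) atTop (𝓝 L) := by
    simpa only [mulVec_mulVec, ← pow_succ'] using (tendsto_add_atTop_iff_nat 1).mpr h
  exact tendsto_nhds_unique (((continuous_const.matrix_mulVec continuous_id).tendsto L).comp h)
    hshift

theorem dotProduct_eq_of_tendsto_pow_mulVec {w : ι → R} (hw : w ᵥ* M = w)
    (h : Tendsto (fun k => M ^ k *ᵥ x) atTop (𝓝 L)) : w ⬝ᵥ L = w ⬝ᵥ x := by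
  have hpow : ∀ k, w ᵥ* M ^ k = w := by
    intro k
    induction k with
    | zero => exact vecMul_one w
    | succ k ih => rw [pow_succ, ← vecMul_vecMul, ih, hw]
  have hconst : ∀ k, w ⬝ᵥ (M ^ k *ᵥ x) = w ⬝ᵥ x := fun k => by rw [dotProduct_mulVec, hpow]
  exact tendsto_nhds_unique (((continuous_const.dotProduct continuous_id).tendsto L).comp h)
    (tendsto_const_nhds.congr fun k => (hconst k).symm)

end orbits

namespace Matrix

variable {ι : Type*} [Fintype ι] [DecidableEq ι] {A : Matrix ι ι ℝ}

theorem abs_le_one_of_hasEigenvalue_of_mem_rowStochastic (hA : A ∈ rowStochastic ℝ ι) {μ : ℝ}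
    (hμ : Module.End.HasEigenvalue (toLin' A) μ) : |μ| ≤ 1 := by
  obtain ⟨k, hk⟩ := eigenvalue_mem_ball hμ
  have hradius : ∑ j ∈ Finset.univ.erase k, ‖A k j‖ = 1 - A k k := by
    rw [← sum_row_of_mem_rowStochastic hA k, ← Finset.add_sum_erase _ _ (Finset.mem_univ k)]
    simp only [Real.norm_of_nonneg (nonneg_of_mem_rowStochastic hA), add_sub_cancel_left]
  rw [Metric.mem_closedBall, Real.dist_eq, hradius] at hk
  have hkk : 0 ≤ A k k := nonneg_of_mem_rowStochastic hA
  rw [abs_le] at hk ⊢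
  constructor <;> linarith [hk.1, hk.2]

theorem apply_eq_of_mulVec_eq_self_of_mem_rowStochastic (hA : A ∈ rowStochastic ℝ ι) {s : Finset ℕ}
    (hirr : ∀ i j, 0 < (∑ k ∈ s, A ^ k) i j) {v : ι → ℝ} (hv : A *ᵥ v = v) (i j : ι) :
    v i = v j := by
  -- the gap `u` to the maximum of `v` is a nonnegative fixed vector vanishing at a maximiser
  obtain ⟨m, -, hm⟩ := Finset.exists_max_image Finset.univ v ⟨i, Finset.mem_univ i⟩
  set u : ι → ℝ := v m • 1 - v
  have hu : ∀ j, 0 ≤ u j := fun j => by simpa [u] using hm j (Finset.mem_univ j)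
  have hAu : A *ᵥ u = u := by
    rw [mulVec_sub, mulVec_smul, one_vecMul_of_mem_rowStochastic hA, hv]
  have hpow : ∀ k, A ^ k *ᵥ u = u := by
    intro k
    induction k with
    | zero => exact one_mulVec u
    | succ k ih => rw [pow_succ', ← mulVec_mulVec, ih, hAu]
  have hsum : ∑ j, (∑ k ∈ s, A ^ k) m j * u j = 0 := by
    change ((∑ k ∈ s, A ^ k) *ᵥ u) m = 0
    simp [sum_mulVec, hpow, u]
  have hzero : ∀ j, u j = 0 := fun j =>
    (mul_eq_zero.mp ((Finset.sum_eq_zero_iff_of_nonneg fun j _ =>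
      mul_nonneg (hirr m j).le (hu j)).mp hsum j (Finset.mem_univ j))).resolve_left
      (hirr m j).ne'
  have hi := hzero i
  have hj := hzero j
  simp only [u, Pi.sub_apply, Pi.smul_apply, Pi.one_apply, smul_eq_mul, mul_one] at hi hj
  linarith

end Matrix

def momentumMatrix {ι : Type*} [DecidableEq ι] (γ : ℝ) (A : Matrix ι ι ℝ) :
    Matrix (ι ⊕ ι) (ι ⊕ ι) ℝ :=
  fromBlocks (γ • A) ((1 - γ) • A) 1 0

section momentumMatrix

variable {ι : Type*} [Fintype ι] [DecidableEq ι] {γ : ℝ} {A : Matrix ι ι ℝ}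

theorem momentumMatrix_pow_mulVec_of_mulVec_eq_smul {μ : ℝ} {v : ι → ℝ} (hv : A *ᵥ v = μ • v)
    (k : ℕ) :
    momentumMatrix γ A ^ k *ᵥ Sum.elim v v =
      Sum.elim (secondOrderSeq (γ * μ) ((1 - γ) * μ) (k + 1) • v)
        (secondOrderSeq (γ * μ) ((1 - γ) * μ) k • v) := by
  induction k with
  | zero => simp [secondOrderSeq]
  | succ k ih =>
    rw [pow_succ', ← mulVec_mulVec, ih, momentumMatrix, fromBlocks_mulVec]
    simp only [Sum.elim_comp_inl, Sum.elim_comp_inr, smul_mulVec, mulVec_smul, hv, one_mulVec,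
      zero_mulVec, smul_zero, add_zero, smul_smul, ← add_smul, secondOrderSeq]
    congr 2
    ring

theorem vecMul_momentumMatrix {w : ι → ℝ} (hw : w ᵥ* A = w) :
    Sum.elim w ((1 - γ) • w) ᵥ* momentumMatrix γ A = Sum.elim w ((1 - γ) • w) := by
  rw [momentumMatrix, vecMul_fromBlocks]
  simp only [Sum.elim_comp_inl, Sum.elim_comp_inr, vecMul_smul, hw, vecMul_one, vecMul_zero,
    add_zero, ← add_smul, add_sub_cancel, one_smul]

theorem momentumMatrix_mulVec_eq_self_iff {y : ι ⊕ ι → ℝ} :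
    momentumMatrix γ A *ᵥ y = y ↔ y ∘ Sum.inr = y ∘ Sum.inl ∧ A *ᵥ (y ∘ Sum.inl) = y ∘ Sum.inl := by
  rw [← Sum.elim_comp_inl_inr y, momentumMatrix, fromBlocks_mulVec, Sum.elim_comp_inl,
    Sum.elim_comp_inr, Sum.elim_eq_iff, smul_mulVec, smul_mulVec, one_mulVec, zero_mulVec, add_zero]
  constructor
  · rintro ⟨hinl, hinr⟩
    rw [← hinr, ← add_smul, add_sub_cancel, one_smul] at hinl
    exact ⟨hinr.symm, hinl⟩
  · rintro ⟨hinr, hfix⟩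
    rw [hinr, ← add_smul, add_sub_cancel, one_smul]
    exact ⟨hfix, rfl⟩

theorem sumElim_mem_convergentOrbits_of_mulVec_eq_smul {μ : ℝ} {v : ι → ℝ}
    (hv : A *ᵥ v = μ • v) (hγ : 0 < γ) (hγ' : γ < 2) (hμ : |μ| ≤ 1)
    (hμ' : 0 < (2 * γ - 1) * μ + 1) :
    Sum.elim v v ∈ convergentOrbits (momentumMatrix γ A) := by
  obtain ⟨l, hl⟩ : ∃ l, Tendsto (secondOrderSeq (γ * μ) ((1 - γ) * μ)) atTop (𝓝 l) := by
    rcases eq_or_ne μ 1 with rfl | hμ₁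
    · exact ⟨1, tendsto_const_nhds.congr fun k => (secondOrderSeq_eq_one (by ring) k).symm⟩
    · obtain ⟨hμ₀, hμ₁'⟩ := abs_le.mp hμ
      refine ⟨0, tendsto_zero_of_linearRecurrence_of_schur ?_ ?_ ?_ fun k => rfl⟩
      · rw [abs_mul]
        have : |1 - γ| < 1 := abs_lt.mpr ⟨by linarith, by linarith⟩
        nlinarith [abs_nonneg (1 - γ)]
      · linarith [lt_of_le_of_ne hμ₁' hμ₁]
      · linarith
  refine ⟨Sum.elim (l • v) (l • v), tendsto_pi_nhds.mpr ?_⟩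
  simp only [momentumMatrix_pow_mulVec_of_mulVec_eq_smul hv]
  rintro (j | j)
  · simpa using ((tendsto_add_atTop_iff_nat 1).mpr hl).mul_const (v j)
  · simpa using hl.mul_const (v j)

theorem sumElim_mem_convergentOrbits (hsym : A.IsSymm) (hA : A ∈ rowStochastic ℝ ι)
    (hγ : 0 < γ) (hγ' : γ < 2)
    (hspec : ∀ μ, Module.End.HasEigenvalue (toLin' A) μ → 0 < (2 * γ - 1) * μ + 1)
    (x : ι → ℝ) : Sum.elim x x ∈ convergentOrbits (momentumMatrix γ A) := by
  have hH : A.IsHermitian := isHermitian_iff_isSymm.mpr hsym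
  set b := hH.eigenvectorBasis
  set c := b.repr (WithLp.toLp 2 x)
  have hx : x = ∑ i, c i • (b i).ofLp := by
    simpa only [WithLp.ofLp_sum, WithLp.ofLp_smul] using congrArg WithLp.ofLp (b.sum_repr _).symm
  have hsplit : Sum.elim x x = ∑ i, c i • Sum.elim (b i).ofLp (b i).ofLp := by
    rw [hx]
    ext (j | j) <;> simp only [Finset.sum_apply, Pi.smul_apply, Sum.elim_inl, Sum.elim_inr]
  rw [hsplit]
  refine Submodule.sum_mem _ fun i _ => Submodule.smul_mem _ _ ?_
  have hμ : Module.End.HasEigenvalue (toLin' A) (hH.eigenvalues i) :=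
    Module.End.hasEigenvalue_of_hasEigenvector
      ⟨Module.End.mem_eigenspace_iff.mpr (hH.mulVec_eigenvectorBasis i),
        (WithLp.ofLp_eq_zero 2).ne.mpr (b.orthonormal.ne_zero i)⟩
  exact sumElim_mem_convergentOrbits_of_mulVec_eq_smul (hH.mulVec_eigenvectorBasis i) hγ hγ'
    (abs_le_one_of_hasEigenvalue_of_mem_rowStochastic hA hμ) (hspec _ hμ)

theorem eq_const_of_tendsto_momentumMatrix_pow_mulVec (hA : A ∈ rowStochastic ℝ ι)
    {s : Finset ℕ} (hirr : ∀ i j, 0 < (∑ k ∈ s, A ^ k) i j) (hγ : γ ≠ 2) {w : ι → ℝ}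
    (hw : w ᵥ* A = w) (hw₁ : ∑ i, w i = 1) {x : ι → ℝ} {L : ι ⊕ ι → ℝ}
    (hL : Tendsto (fun k => momentumMatrix γ A ^ k *ᵥ Sum.elim x x) atTop (𝓝 L)) :
    L = fun _ => w ⬝ᵥ x := by
  obtain ⟨hinr, hfix⟩ :=
    momentumMatrix_mulVec_eq_self_iff.mp (mulVec_eq_self_of_tendsto_pow_mulVec hL)
  have hconst := apply_eq_of_mulVec_eq_self_of_mem_rowStochastic hA hirr hfix
  have hdot (j : ι) : w ⬝ᵥ (L ∘ Sum.inl) = L (Sum.inl j) := by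
    simp only [dotProduct, Function.comp_apply, fun i => show L (Sum.inl i) = L (Sum.inl j) from
      hconst i j, ← Finset.sum_mul, hw₁, one_mul]
  -- the limit carries the invariant `w ⬝ᵥ y₁ + (1 - γ) w ⬝ᵥ y₂` of the iteration
  have hinv := dotProduct_eq_of_tendsto_pow_mulVec (vecMul_momentumMatrix hw) hL
  rw [← Sum.elim_comp_inl_inr L, hinr, sumElim_dotProduct_sumElim, sumElim_dotProduct_sumElim,
    smul_dotProduct, smul_dotProduct, smul_eq_mul, smul_eq_mul] at hinv
  have hlim : w ⬝ᵥ (L ∘ Sum.inl) = w ⬝ᵥ x :=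
    mul_left_cancel₀ (sub_ne_zero.mpr hγ.symm) (by linear_combination hinv)
  ext (j | j)
  · rw [← hdot j, hlim]
  · rw [← Function.comp_apply (f := L), hinr, Function.comp_apply, ← hdot j, hlim]

end momentumMatrix

theorem stmt_12_general (n : ℕ) (A : Matrix (Fin n) (Fin n) ℝ)
    (hnonneg : ∀ i j, 0 ≤ A i j)
    (hrow : ∀ i, ∑ j, A i j = 1)
    (hsym : A.IsSymm)
    (hirr : ∀ i j, 0 < (∑ k ∈ Finset.range n, A ^ k) i j)
    (lamn : ℝ)
    (hmin : ∀ μ : ℝ, Module.End.HasEigenvalue (Matrix.toLin' A) μ → lamn ≤ μ)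
    (γ : ℝ) (hγ : 0 < γ) (hγ' : γ < 2) (hcrit : 2 * γ * lamn - lamn + 1 > 0)
    (Ahat : Matrix (Fin n ⊕ Fin n) (Fin n ⊕ Fin n) ℝ)
    (hAhat : Ahat = Matrix.fromBlocks (γ • A) ((1 - γ) • A) 1 0)
    (w₁ : Fin n → ℝ) (hw : Matrix.vecMul w₁ A = w₁) (hw1 : ∑ i, w₁ i = 1)
    (x₀ : Fin n → ℝ) :
    Tendsto (fun k => (Ahat ^ k).mulVec (Sum.elim x₀ x₀)) atTop
      (nhds (fun _ => ∑ i, w₁ i * x₀ i)) := by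
  have hA : A ∈ rowStochastic ℝ (Fin n) := mem_rowStochastic_iff_sum.mpr ⟨hnonneg, hrow⟩
  have hspec (μ) (hμ : Module.End.HasEigenvalue (toLin' A) μ) : 0 < (2 * γ - 1) * μ + 1 := by
    have hlow := hmin μ hμ
    have hup := (abs_le.mp (abs_le_one_of_hasEigenvalue_of_mem_rowStochastic hA hμ)).2
    rcases le_total 0 (2 * γ - 1) with h | h
    · nlinarith [mul_le_mul_of_nonneg_left hlow h]
    · nlinarith [mul_le_mul_of_nonpos_left hup h]
  obtain ⟨L, hL⟩ := sumElim_mem_convergentOrbits hsym hA hγ hγ' hspec x₀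
  rw [eq_const_of_tendsto_momentumMatrix_pow_mulVec hA hirr hγ'.ne hw hw1 hL] at hL
  rwa [hAhat]

theorem stmt_12 (n : ℕ) (hn : 2 ≤ n) (A : Matrix (Fin n) (Fin n) ℝ)
    (hnonneg : ∀ i j, 0 ≤ A i j)
    (hrow : ∀ i, ∑ j, A i j = 1)
    (hsym : A.IsSymm)
    (hirr : ∀ i j, 0 < (∑ k ∈ Finset.range n, A ^ k) i j)
    (lamn : ℝ)
    (hlamn : Module.End.HasEigenvalue (Matrix.toLin' A) lamn)
    (hmin : ∀ μ : ℝ, Module.End.HasEigenvalue (Matrix.toLin' A) μ → lamn ≤ μ)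
    (γ : ℝ) (hγ : 0 < γ) (hγ' : γ < 2) (hcrit : 2 * γ * lamn - lamn + 1 > 0)
    (Ahat : Matrix (Fin n ⊕ Fin n) (Fin n ⊕ Fin n) ℝ)
    (hAhat : Ahat = Matrix.fromBlocks (γ • A) ((1 - γ) • A) 1 0)
    (w₁ : Fin n → ℝ) (hw : Matrix.vecMul w₁ A = w₁) (hw1 : ∑ i, w₁ i = 1)
    (x₀ : Fin n → ℝ) :
    Tendsto (fun k => (Ahat ^ k).mulVec (Sum.elim x₀ x₀)) atTop
      (nhds (fun _ => ∑ i, w₁ i * x₀ i)) :=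
  stmt_12_general n A hnonneg hrow hsym hirr lamn hmin γ hγ hγ' hcrit Ahat hAhat w₁ hw hw1 x₀
end

section
/- For all ρ ∈ (0,1): √(1+ρ) − 1 < ρ/(1 + √(1−ρ²)) < ρ. -/
theorem stmt_17 (ρ : ℝ) (hρ : 0 < ρ) (hρ' : ρ < 1) :
    Real.sqrt (1 + ρ) - 1 < ρ / (1 + Real.sqrt (1 - ρ ^ 2)) ∧
      ρ / (1 + Real.sqrt (1 - ρ ^ 2)) < ρ := by
  set s := Real.sqrt (1 - ρ ^ 2) with hs
  set a := Real.sqrt (1 + ρ) with ha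
  have h1 : (0:ℝ) < 1 - ρ ^ 2 := by nlinarith
  have hs0 : 0 < s := Real.sqrt_pos.mpr h1
  have ha0 : 0 < a := Real.sqrt_pos.mpr (by linarith)
  have hs2 : s ^ 2 = 1 - ρ ^ 2 := Real.sq_sqrt (le_of_lt h1)
  have ha2 : a ^ 2 = 1 + ρ := Real.sq_sqrt (by linarith)
  have ha1 : 1 < a := by nlinarith
  have hsa : s < a := by nlinarith
  constructor
  · rw [lt_div_iff₀ (by linarith)]
    nlinarith
  · rw [div_lt_iff₀ (by linarith)]
    nlinarith
end

section
/- Let λ₂, λ_n ∈ ℝ with λ_n < 0, 0 < λ₂, and let γ* = (2/(−λ_n))(√(1 − λ_n) − 1) ∈ (0,1). Then −γ*λ_n/2 ≥ (γ*λ₂ + √(γ*²λ₂² − 4(γ*−1)λ₂))/2 if and only if λ₂ ≤ |λ_n|/3. -/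
/-!
The choice of `γ*` makes the discriminant of `z² − γ* λ z + (γ* − 1) λ` vanish at `λ = λₙ`,
i.e. `γ*² λₙ = 4 (γ* − 1)`. Substituting this into the discriminant at `λ = λ₂` turns it into
`γ*² (λ₂² − λₙ λ₂)`, so after cancelling `γ*` the claim is
`√(λ₂² + ρ λ₂) ≤ ρ − λ₂ ↔ λ₂ ≤ ρ / 3` with `ρ = −λₙ`, which is elementary.
-/

noncomputable def gammaStar (lam : ℝ) : ℝ := 2 / (-lam) * (Real.sqrt (1 - lam) - 1)

lemma gammaStar_sq_mul {lam : ℝ} (hne : lam ≠ 0) (hle : lam ≤ 1) :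
    gammaStar lam ^ 2 * lam = 4 * (gammaStar lam - 1) := by
  have hs : Real.sqrt (1 - lam) ^ 2 = 1 - lam := Real.sq_sqrt (by linarith)
  have hγ : gammaStar lam * lam = 2 * (1 - Real.sqrt (1 - lam)) := by
    unfold gammaStar
    field_simp
    ring
  -- square `hγ`, then eliminate `√(1 - lam) ^ 2` by `hs`
  refine mul_right_cancel₀ hne ?_
  linear_combination (gammaStar lam * lam + 2 * (1 - Real.sqrt (1 - lam)) - 4) * hγ + 4 * hs

lemma sqrt_sq_add_mul_le_sub_iff {a x : ℝ} (ha : 0 < a) :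
    Real.sqrt (x ^ 2 + a * x) ≤ a - x ↔ x ≤ a / 3 := by
  rw [Real.sqrt_le_iff]
  constructor
  · rintro ⟨-, hsq⟩
    nlinarith
  · intro hx
    constructor <;> nlinarith

theorem stmt_18_general (lam2 lamn : ℝ) (hlamn : lamn < 0)
    (γs : ℝ) (hγ : γs = (2 / (-lamn)) * (Real.sqrt (1 - lamn) - 1))
    (hγ0 : 0 < γs) :
    -γs * lamn / 2 ≥ (γs * lam2 + Real.sqrt (γs ^ 2 * lam2 ^ 2 - 4 * (γs - 1) * lam2)) / 2 ↔
      lam2 ≤ |lamn| / 3 := by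
  have hkey : γs ^ 2 * lamn = 4 * (γs - 1) :=
    hγ ▸ gammaStar_sq_mul hlamn.ne (by linarith)
  have hdisc : γs ^ 2 * lam2 ^ 2 - 4 * (γs - 1) * lam2 = γs ^ 2 * (lam2 ^ 2 + -lamn * lam2) := by
    linear_combination lam2 * hkey
  rw [hdisc, Real.sqrt_mul (sq_nonneg γs), Real.sqrt_sq hγ0.le, abs_of_neg hlamn,
    ← sqrt_sq_add_mul_le_sub_iff (neg_pos.mpr hlamn), ← mul_le_mul_iff_right₀ hγ0]
  constructor <;> intro h <;> linarith

theorem stmt_18 (lam2 lamn : ℝ) (hlamn : lamn < 0) (hlam2 : 0 < lam2)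
    (γs : ℝ) (hγ : γs = (2 / (-lamn)) * (Real.sqrt (1 - lamn) - 1))
    (hγ0 : 0 < γs) (hγ1 : γs < 1) :
    -γs * lamn / 2 ≥ (γs * lam2 + Real.sqrt (γs ^ 2 * lam2 ^ 2 - 4 * (γs - 1) * lam2)) / 2 ↔
      lam2 ≤ |lamn| / 3 :=
  stmt_18_general lam2 lamn hlamn γs hγ hγ0
end
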